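/- arXiv:2501.12091 — 7 statements merged into one kernel-verified Lean document; each statement's English description precedes it below -/
import Mathlib

section
/- Let S be a finitely generated submonoid of a lattice M with ℤS = M, and let C = ℝ_{≥0} S be the cone it generates in M ⊗ ℝ. Then the saturation S̄ = C ∩ M is also a finitely generated monoid (Gordan's lemma for the saturation). -/
noncomputable section


noncomputable section

def emb (d : ℕ) : (Fin d → ℤ) →+ (Fin d → ℝ) where
  toFun m := fun i => (m i : ℝ)
  map_zero' := by ext i; simp
  map_add' x y := by ext i; simp [Pi.add_apply]

def IsFace (d : ℕ) (C D : Set (Fin d → ℝ)) : Prop :=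
  ∃ u : (Fin d → ℝ) →ₗ[ℝ] ℝ, (∀ x ∈ C, 0 ≤ u x) ∧ D = {x ∈ C | u x = 0}

def latticeOf (d : ℕ) (S : AddSubmonoid (Fin d → ℤ)) (D : Set (Fin d → ℝ)) :
    AddSubgroup (Fin d → ℤ) :=
  AddSubgroup.closure ((S : Set (Fin d → ℤ)) ∩ (emb d) ⁻¹' D)

def latIn (d : ℕ) (D : Set (Fin d → ℝ)) : AddSubgroup (Fin d → ℤ) :=
  AddSubgroup.comap (emb d) (Submodule.span ℝ D).toAddSubgroup

def IsRelSat (d : ℕ) (S : AddSubmonoid (Fin d → ℤ)) (C D : Set (Fin d → ℝ)) : Prop :=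
  IsFace d C D ∧ D ≠ C ∧
    latticeOf d S D =
      (⨅ D' ∈ {D' : Set (Fin d → ℝ) | IsFace d C D' ∧ D ⊂ D'}, latticeOf d S D') ⊓ latIn d D

def IsRUF (d : ℕ) (S : AddSubmonoid (Fin d → ℤ)) (C D : Set (Fin d → ℝ)) : Prop :=
  IsFace d C D ∧ ¬ IsRelSat d S C D

def Seminormal (d : ℕ) (S : AddSubmonoid (Fin d → ℤ)) (C : Set (Fin d → ℝ)) : Prop :=
  ∀ D : Set (Fin d → ℝ), IsFace d C D →
    ∀ m : Fin d → ℤ, emb d m ∈ intrinsicInterior ℝ D → (m ∈ S ↔ m ∈ latticeOf d S D)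

def coneOf (d : ℕ) (S : AddSubmonoid (Fin d → ℤ)) : Set (Fin d → ℝ) :=
  ↑(Submodule.span NNReal (emb d '' (S : Set (Fin d → ℤ))))

def pFace (d p : ℕ) (S : AddSubmonoid (Fin d → ℤ)) (D : Set (Fin d → ℝ)) : Prop :=
  p ∣ (latticeOf d S D).relIndex (latIn d D)

def Mtilde (d p : ℕ) (S : AddSubmonoid (Fin d → ℤ)) (D : Set (Fin d → ℝ)) : Set (Fin d → ℤ) :=
  {x | x ∈ latIn d D ∧ ∃ m : ℤ, IsCoprime m (p : ℤ) ∧ m • x ∈ latticeOf d S D}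

/-! Write `x ∈ ℤ^d` in the saturation as a nonnegative real combination `∑ cᵢ vᵢ` of the
finitely many generators. Then `x - ∑ ⌊cᵢ⌋ vᵢ` is a lattice point of the cone lying in the
parallelepiped `∑ [0,1] vᵢ`, a bounded set with finitely many lattice points, so these points
together with the `vᵢ` generate the saturation. -/

open Set Submodule

def latticePoints (d : ℕ) (C : Submodule NNReal (Fin d → ℝ)) : AddSubmonoid (Fin d → ℤ) :=
  C.toAddSubmonoid.comap (emb d)

theorem mem_latticePoints {d : ℕ} {C : Submodule NNReal (Fin d → ℝ)} {x : Fin d → ℤ} :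
    x ∈ latticePoints d C ↔ emb d x ∈ C :=
  Iff.rfl

theorem emb_apply (d : ℕ) (x : Fin d → ℤ) (j : Fin d) : emb d x j = (x j : ℝ) := rfl

theorem span_image_closure {R M E F : Type*} [Semiring R] [AddCommMonoid M]
    [AddCommMonoid E] [Module R E] [FunLike F M E] [AddMonoidHomClass F M E] (f : F)
    (s : Set M) : span R (f '' AddSubmonoid.closure s) = span R (f '' s) := by
  rw [← AddSubmonoid.coe_map, AddMonoidHom.map_mclosure, span_closure]

theorem abs_sum_mul_le_sum_abs {ι : Type*} (s : Finset ι) (r a : ι → ℝ)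
    (hr : ∀ i, r i ∈ Icc 0 1) : |∑ i ∈ s, r i * a i| ≤ ∑ i ∈ s, |a i| := by
  refine (Finset.abs_sum_le_sum_abs _ _).trans (Finset.sum_le_sum fun i _ => ?_)
  rw [abs_mul, abs_of_nonneg (hr i).1]
  exact mul_le_of_le_one_left (abs_nonneg _) (hr i).2

theorem NNReal.sub_floor_le_one (c : NNReal) : c - ⌊c⌋₊ ≤ 1 :=
  tsub_le_iff_left.2 (add_comm (⌊c⌋₊ : NNReal) 1 ▸ (Nat.lt_floor_add_one c).le)

section

variable {d : ℕ} {ι : Type*} [Fintype ι] (v : ι → Fin d → ℤ)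

theorem exists_sub_mem_closure_of_mem_latticePoints {x : Fin d → ℤ}
    (hx : x ∈ latticePoints d (span NNReal (range (emb d ∘ v)))) :
    ∃ z ∈ latticePoints d (span NNReal (range (emb d ∘ v))),
      (∀ j, |z j| ≤ ∑ i, |v i j|) ∧ x - z ∈ AddSubmonoid.closure (range v) := by
  obtain ⟨c, hc⟩ := (mem_span_range_iff_exists_fun NNReal).1 hx
  set y : Fin d → ℤ := ∑ i, ⌊c i⌋₊ • v i
  have hfloor : ∀ i, (⌊c i⌋₊ : NNReal) ≤ c i := fun i => Nat.floor_le (c i).2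
  have hz : emb d (x - y) = ∑ i, (c i - ⌊c i⌋₊) • emb d (v i) := by
    rw [map_sub, ← hc, map_sum, ← Finset.sum_sub_distrib]
    refine Finset.sum_congr rfl fun i _ => ?_
    rw [map_nsmul, ← Nat.cast_smul_eq_nsmul NNReal, sub_eq_iff_eq_add, ← add_smul,
      tsub_add_cancel_of_le (hfloor i)]
    rfl
  refine ⟨x - y, ?_, fun j => ?_, ?_⟩
  · rw [mem_latticePoints, hz]
    exact sum_mem fun i _ => smul_mem _ _ (subset_span (mem_range_self i))
  · have hj := congr_fun hz j
    rw [emb_apply, Finset.sum_apply] at hj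
    have hbound := abs_sum_mul_le_sum_abs Finset.univ (fun i => ((c i - ⌊c i⌋₊ : NNReal) : ℝ))
      (fun i => (v i j : ℝ)) fun i => ⟨NNReal.coe_nonneg _, NNReal.sub_floor_le_one (c i)⟩
    exact_mod_cast hj ▸ hbound
  · rw [sub_sub_cancel]
    exact sum_mem fun i _ => nsmul_mem (AddSubmonoid.subset_closure (mem_range_self i)) _

theorem latticePoints_span_range_fg : (latticePoints d (span NNReal (range (emb d ∘ v)))).FG := by
  set T := latticePoints d (span NNReal (range (emb d ∘ v)))
  set box : Set (Fin d → ℤ) := pi univ fun j => Icc (-∑ i, |v i j|) (∑ i, |v i j|)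
  have hvT : range v ⊆ T := by
    rintro _ ⟨i, rfl⟩
    exact subset_span (mem_range_self i)
  refine (AddSubmonoid.fg_iff T).2 ⟨range v ∪ (box ∩ T), le_antisymm ?_ fun x hx => ?_, ?_⟩
  · exact AddSubmonoid.closure_le.2 (union_subset hvT inter_subset_right)
  · obtain ⟨z, hzT, hzbox, hxz⟩ := exists_sub_mem_closure_of_mem_latticePoints v hx
    have hz : z ∈ box := fun j _ => abs_le.1 (hzbox j)
    have hzgen : z ∈ AddSubmonoid.closure (range v ∪ (box ∩ T)) :=
      AddSubmonoid.subset_closure (Or.inr ⟨hz, hzT⟩)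
    simpa using add_mem (AddSubmonoid.closure_mono subset_union_left hxz) hzgen
  · exact (finite_range v).union ((Set.Finite.pi fun j => finite_Icc _ _).inter_of_left _)

end

theorem stmt_4_general (d : ℕ) (S : AddSubmonoid (Fin d → ℤ)) (hfg : S.FG) :
    (AddSubmonoid.comap (emb d)
      (Submodule.span NNReal (emb d '' (S : Set (Fin d → ℤ)))).toAddSubmonoid).FG := by
  obtain ⟨F, rfl⟩ := hfg
  have hcone : span NNReal (emb d '' AddSubmonoid.closure (F : Set (Fin d → ℤ)))
      = span NNReal (range (emb d ∘ ((↑) : F → Fin d → ℤ))) := by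
    rw [span_image_closure, range_comp, Subtype.range_coe_subtype, Finset.setOfPred_mem]
  rw [hcone]
  exact latticePoints_span_range_fg _

/-- Gordan's lemma for the saturation: if `S` is a finitely generated submonoid of
`ℤ^d` with `ℤS = ℤ^d` and `C = ℝ_{≥0} S` is the cone it generates in `ℝ^d`, then the
saturation `S̄ = C ∩ ℤ^d` is again a finitely generated monoid. -/
theorem stmt_4 (d : ℕ) (S : AddSubmonoid (Fin d → ℤ)) (hfg : S.FG)
    (hZ : AddSubgroup.closure (S : Set (Fin d → ℤ)) = ⊤) :
    (AddSubmonoid.comap (emb d)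
      (Submodule.span NNReal (emb d '' (S : Set (Fin d → ℤ)))).toAddSubmonoid).FG :=
  stmt_4_general d S hfg

end
end
end

section
/- Let S be a seminormal affine monoid in a lattice M with cone C, i.e., for every face D of C, S ∩ int(D) = M_D ∩ int(D) where M_D = ℤ(S ∩ D). Then an element u of the saturation S̄ = C ∩ M lies in S if and only if for every relatively unsaturated face D with u ∈ D, one has u ∈ M_D. -/
noncomputable section


noncomputable section

/-!
Let `D` be the smallest face of `C` containing `u`. Because `C` is polyhedral, `u` lies in the
relative interior of `D`: otherwise a functional separating `u` from the relative interior of `D`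
can be corrected by a multiple of the functional defining `D` into one that is nonnegative on
all of `C`, and it cuts out a smaller face still containing `u`. By seminormality `u ∈ S` as soon
as `u ∈ M_D`, and `u ∈ M_D` follows by descending induction on the dimension of the faces
containing `u`: for a relatively unsaturated face this is the hypothesis, and a relatively
saturated face `D` has `M_D = ⋂_{D' ⊋ D} M_{D'} ∩ span D`.
-/

open Set Submodule
open scoped NNReal

section RelativeInterior

variable {V : Type*} [NormedAddCommGroup V] [NormedSpace ℝ V] [FiniteDimensional ℝ V]

theorem PointedCone.exists_nonneg_pos_of_notMem_intrinsicInterior (K : PointedCone ℝ V) {x : V}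
    (hx : x ∈ K) (hx' : x ∉ intrinsicInterior ℝ (K : Set V)) :
    ∃ g : V →ₗ[ℝ] ℝ, (∀ y ∈ K, 0 ≤ g y) ∧ g x = 0 ∧ ∃ y ∈ K, 0 < g y := by
  set W := span ℝ (K : Set V)
  set t : Set W := W.subtype ⁻¹' K
  have ht : Convex ℝ t := K.convex.linear_preimage W.subtype
  have h0t : (0 : W) ∈ t := K.zero_mem
  have hspan : span ℝ t = ⊤ := span_span_coe_preimage
  have hint : (interior t).Nonempty := by
    rw [ht.interior_nonempty_iff_affineSpan_eq_top,
      AffineSubspace.affineSpan_eq_top_iff_vectorSpan_eq_top_of_nonempty ℝ W W ⟨0, h0t⟩,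
      vectorSpan_eq_span_vsub_set_right ℝ h0t]
    simpa using hspan
  set xW : W := ⟨x, Submodule.subset_span hx⟩
  have hxW : xW ∉ interior t := by
    refine fun h => hx' ?_
    have himage : W.subtypeₗᵢ.toAffineIsometry '' t = K :=
      image_preimage_eq_of_subset fun y hy => ⟨⟨y, Submodule.subset_span hy⟩, rfl⟩
    rw [← himage, AffineIsometry.intrinsicInterior_image]
    exact ⟨xW, interior_subset_intrinsicInterior h, rfl⟩
  obtain ⟨f, hf⟩ := geometric_hahn_banach_open_point ht.interior isOpen_interior hxW
  have hft : ∀ a ∈ t, f a ≤ f xW := by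
    refine fun a ha => closure_minimal (fun b hb => (hf b hb).le)
      (isClosed_le f.continuous continuous_const) ?_
    rw [ht.closure_interior_eq_closure_of_nonempty_interior hint]
    exact subset_closure ha
  have hfx : f xW = 0 := by
    have h2x : f (xW + xW) ≤ f xW := hft _ (K.add_mem hx hx)
    rw [map_add] at h2x
    linarith [hft 0 h0t, map_zero f]
  obtain ⟨a, ha⟩ := hint
  obtain ⟨g, hg⟩ := LinearMap.exists_extend (-(f : W →ₗ[ℝ] ℝ))
  have hgW : ∀ z : W, g z = -f z := fun z => LinearMap.congr_fun hg z
  refine ⟨g, fun y hy => ?_, ?_, a, (interior_subset ha : a ∈ t), ?_⟩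
  · linarith [hgW ⟨y, Submodule.subset_span hy⟩, hft ⟨y, Submodule.subset_span hy⟩ hy]
  · simpa [hfx] using hgW xW
  · linarith [hgW a, hf a ha]

end RelativeInterior

theorem PointedCone.exists_add_mul_nonneg {V : Type*} [AddCommGroup V] [Module ℝ V]
    {K : PointedCone ℝ V} (hK : K.FG) {F g : V →ₗ[ℝ] ℝ} (hF : ∀ x ∈ K, 0 ≤ F x)
    (hg : ∀ x ∈ K, F x = 0 → 0 ≤ g x) :
    ∃ c : ℝ, ∀ x ∈ K, 0 ≤ g x + c * F x := by
  obtain ⟨G, rfl⟩ := hK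
  -- on a generator `w` with `F w = 0` the summand is `max 0 (-g w / 0) = 0`
  set c := ∑ w ∈ G, max 0 (-g w / F w)
  have hgen : ∀ w ∈ G, 0 ≤ g w + c * F w := by
    intro w hw
    rcases (hF w (Submodule.subset_span hw)).eq_or_lt with hFw | hFw
    · rw [← hFw, mul_zero, add_zero]
      exact hg w (Submodule.subset_span hw) hFw.symm
    · have hw_le : -g w / F w ≤ c := (le_max_right _ _).trans
        (Finset.single_le_sum (f := fun v => max 0 (-g v / F v)) (fun _ _ => le_max_left _ _) hw)
      rw [div_le_iff₀ hFw] at hw_le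
      linarith
  have hle : span _ (G : Set V) ≤ (PointedCone.positive ℝ ℝ).comap (g + c • F) :=
    span_le.2 fun w hw => (PointedCone.mem_positive ℝ ℝ).2 (hgen w hw)
  exact ⟨c, fun x hx => (PointedCone.mem_positive ℝ ℝ).1 (hle hx)⟩

section Faces

variable {d : ℕ}

theorem isFace_self (C : Set (Fin d → ℝ)) : IsFace d C C :=
  ⟨0, fun _ _ => le_rfl, by simp⟩

theorem IsFace.subset {C D : Set (Fin d → ℝ)} (hD : IsFace d C D) : D ⊆ C := by
  obtain ⟨F, -, rfl⟩ := hD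
  exact fun x hx => hx.1

theorem IsFace.finrank_span_lt {C D D' : Set (Fin d → ℝ)} (hD : IsFace d C D) (hD'C : D' ⊆ C)
    (h : D ⊂ D') : Module.finrank ℝ (span ℝ D) < Module.finrank ℝ (span ℝ D') := by
  obtain ⟨F, -, rfl⟩ := hD
  obtain ⟨y, hyD', hyD⟩ := exists_of_ssubset h
  have hker : span ℝ {x ∈ C | F x = 0} ≤ LinearMap.ker F := span_le.2 fun x hx => hx.2
  refine finrank_lt_finrank_of_lt (lt_of_le_of_ne (span_mono h.subset) fun heq => ?_)
  exact hyD ⟨hD'C hyD', hker (heq ▸ subset_span hyD')⟩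

theorem IsFace.exists_ssubset_of_notMem_intrinsicInterior {K : PointedCone ℝ (Fin d → ℝ)}
    (hK : K.FG) {D : Set (Fin d → ℝ)} (hD : IsFace d K D) {x : Fin d → ℝ} (hxD : x ∈ D)
    (hx : x ∉ intrinsicInterior ℝ D) : ∃ D', IsFace d K D' ∧ x ∈ D' ∧ D' ⊂ D := by
  obtain ⟨F, hF, rfl⟩ := hD
  obtain ⟨g, hg, hgx, y, hyD, hgy⟩ :=
    (K ⊓ (LinearMap.ker F).restrictScalars ℝ≥0).exists_nonneg_pos_of_notMem_intrinsicInterior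
      hxD hx
  obtain ⟨c, hc⟩ := PointedCone.exists_add_mul_nonneg hK hF fun z hz hFz => hg z ⟨hz, hFz⟩
  -- the extra copy of `F` forces `F = 0` on the new face
  have hsplit : ∀ z ∈ K, (g + (c + 1) • F) z = (g z + c * F z) + F z := fun z _ => by
    simp only [LinearMap.add_apply, LinearMap.smul_apply, smul_eq_mul]
    ring
  refine ⟨{z ∈ K | (g + (c + 1) • F) z = 0}, ⟨_, fun z hz => ?_, rfl⟩, ⟨hxD.1, ?_⟩, ?_, ?_⟩
  · rw [hsplit z hz]
    exact add_nonneg (hc z hz) (hF z hz)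
  · rw [hsplit x hxD.1, hgx, hxD.2]
    ring
  · rintro z ⟨hzK, hz⟩
    rw [hsplit z hzK] at hz
    refine ⟨hzK, le_antisymm ?_ (hF z hzK)⟩
    linarith [hc z hzK]
  · intro hsub
    have hy := (hsub hyD).2
    rw [hsplit y hyD.1, hyD.2] at hy
    linarith

theorem PointedCone.exists_isFace_mem_intrinsicInterior {K : PointedCone ℝ (Fin d → ℝ)}
    (hK : K.FG) {x : Fin d → ℝ} (hx : x ∈ K) :
    ∃ D, IsFace d K D ∧ x ∈ intrinsicInterior ℝ D := by
  suffices ∀ D, IsFace d K D → x ∈ D → ∃ D, IsFace d K D ∧ x ∈ intrinsicInterior ℝ D from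
    this K (isFace_self _) hx
  intro D hD hxD
  induction hn : Module.finrank ℝ (span ℝ D) using Nat.strong_induction_on generalizing D with
  | _ n ih =>
  by_cases hint : x ∈ intrinsicInterior ℝ D
  · exact ⟨D, hD, hint⟩
  obtain ⟨D', hD', hxD', hD'D⟩ := hD.exists_ssubset_of_notMem_intrinsicInterior hK hxD hint
  exact ih _ (hn ▸ hD'.finrank_span_lt hD.subset hD'D) D' hD' hxD' rfl

theorem mem_latticeOf_of_isFace {S : AddSubmonoid (Fin d → ℤ)} {C D : Set (Fin d → ℝ)}
    {u : Fin d → ℤ} (H : ∀ D, IsRUF d S C D → emb d u ∈ D → u ∈ latticeOf d S D)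
    (hD : IsFace d C D) (huD : emb d u ∈ D) : u ∈ latticeOf d S D := by
  induction hn : d - Module.finrank ℝ (span ℝ D) using Nat.strong_induction_on generalizing D with
  | _ n ih =>
  by_cases hRUF : IsRUF d S C D
  · exact H D hRUF huD
  obtain ⟨-, -, hlat⟩ := not_not.1 (not_and.1 hRUF hD)
  rw [hlat]
  refine AddSubgroup.mem_inf.2 ⟨AddSubgroup.mem_iInf.2 fun D' => AddSubgroup.mem_iInf.2 ?_,
    subset_span huD⟩
  rintro ⟨hD', hDD'⟩
  have hlt := hD.finrank_span_lt hD'.subset hDD'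
  have hle : Module.finrank ℝ (span ℝ D') ≤ d := by
    simpa using finrank_le (span ℝ D')
  exact ih _ (by omega) hD' (hDD'.subset huD) rfl

end Faces

theorem AddSubmonoid.FG.hull_image {M V : Type*} [AddCommMonoid M] [AddCommGroup V] [Module ℝ V]
    {S : AddSubmonoid M} (hS : S.FG) (f : M →+ V) : (PointedCone.hull ℝ (f '' S)).FG := by
  obtain ⟨T, rfl⟩ := hS
  rw [← AddSubmonoid.coe_map, AddMonoidHom.map_mclosure, PointedCone.hull, span_closure]
  exact fg_span (T.finite_toSet.image _)

theorem stmt_5_general (d : ℕ) (S : AddSubmonoid (Fin d → ℤ)) (hfg : S.FG)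
    (C : Set (Fin d → ℝ)) (hC : C = coneOf d S)
    (hsn : Seminormal d S C)
    (u : Fin d → ℤ) (hu : emb d u ∈ C) :
    u ∈ S ↔ ∀ D : Set (Fin d → ℝ), IsRUF d S C D → emb d u ∈ D → u ∈ latticeOf d S D := by
  refine ⟨fun huS D _ huD => AddSubgroup.subset_closure ⟨huS, huD⟩, fun H => ?_⟩
  subst hC
  obtain ⟨D, hD, hint⟩ :=
    PointedCone.exists_isFace_mem_intrinsicInterior (hfg.hull_image (emb d)) hu
  exact (hsn D hD u hint).2 (mem_latticeOf_of_isFace H hD (intrinsicInterior_subset hint))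

/-- Let `S` be a seminormal affine monoid in `ℤ^d` with pointed cone `C = ℝ_{≥0}S`.
An element `u` of the saturation `S̄ = C ∩ ℤ^d` lies in `S` if and only if for every
relatively unsaturated face `D` of `C` with `u ∈ D`, one has `u ∈ M_D = ℤ(S ∩ D)`. -/
theorem stmt_5 (d : ℕ) (S : AddSubmonoid (Fin d → ℤ)) (hfg : S.FG)
    (hZ : AddSubgroup.closure (S : Set (Fin d → ℤ)) = ⊤)
    (C : Set (Fin d → ℝ)) (hC : C = coneOf d S)
    (hpointed : ∀ x ∈ C, -x ∈ C → x = 0)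
    (hsn : Seminormal d S C)
    (u : Fin d → ℤ) (hu : emb d u ∈ C) :
    u ∈ S ↔ ∀ D : Set (Fin d → ℝ), IsRUF d S C D → emb d u ∈ D → u ∈ latticeOf d S D :=
  stmt_5_general d S hfg C hC hsn u hu
end
end
end

section
/- Let S be a seminormal affine monoid with cone C in characteristic p > 0. If D ⊊ C is a p-face (p divides the index [M ∩ span(D) : M_D]), then D is contained in some maximal pRUF (a relatively unsaturated p-face maximal among such). -/
noncomputable section


noncomputable section

open scoped NNReal

/-!
A finitely generated cone has finitely many faces, so among the `p`-faces containing `D` there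
is a maximal one, `E`. If `E` were relatively saturated, no face strictly above it would be a
`p`-face, so the product `N` of their indices would be prime to `p`; but saturation means
`N • latIn d E ≤ latticeOf d S E`, and `p` divides the order of the finite group
`latIn d E / latticeOf d S E`, so `p ∣ N` by Cauchy's theorem.
-/

instance AddSubgroup.fg_of_addGroup_fg {G : Type*} [AddCommGroup G] [AddGroup.FG G]
    (K : AddSubgroup G) : AddGroup.FG K := by
  have : Module.Finite ℤ G := Module.Finite.iff_addGroup_fg.mpr ‹_›
  exact Module.Finite.iff_addGroup_fg.mp
    (inferInstanceAs (Module.Finite ℤ (AddSubgroup.toIntSubmodule K)))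

/-- `K / H` is finitely generated and killed by `n`, hence finite: Cauchy's theorem applies. -/
theorem AddSubgroup.prime_dvd_of_nsmul_mem {G : Type*} [AddCommGroup G] {p n : ℕ}
    [Fact p.Prime] {H K : AddSubgroup G} [AddGroup.FG K] (hn : n ≠ 0)
    (hnK : ∀ x ∈ K, n • x ∈ H) (hp : p ∣ H.relIndex K) : p ∣ n := by
  have hkill : ∀ q : K ⧸ H.addSubgroupOf K, n • q = 0 := by
    intro q
    induction q using QuotientAddGroup.induction_on with | H x => ?_
    rw [← QuotientAddGroup.mk_nsmul, QuotientAddGroup.eq_zero_iff, mem_addSubgroupOf]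
    exact hnK x x.2
  have : Finite (K ⧸ H.addSubgroupOf K) := AddCommGroup.finite_of_fg_isAddTorsion _ fun q =>
    (isOfFinAddOrder_iff_nsmul_eq_zero).mpr ⟨n, Nat.pos_of_ne_zero hn, hkill q⟩
  obtain ⟨q, hq⟩ := exists_prime_addOrderOf_dvd_card' p hp
  exact hq ▸ addOrderOf_dvd_of_nsmul_eq_zero (hkill q)

/-- A nonnegative combination of generators lies on a face only if every generator it uses does. -/
theorem IsFace.eq_span_inter {d : ℕ} {s D : Set (Fin d → ℝ)}
    (hD : IsFace d (Submodule.span ℝ≥0 s) D) : D = Submodule.span ℝ≥0 (s ∩ D) := by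
  obtain ⟨u, hu, rfl⟩ := hD
  refine subset_antisymm ?_ ?_
  · rintro x ⟨hx, hux⟩
    induction hx using Submodule.span_induction with
    | mem y hy => exact Submodule.subset_span ⟨hy, Submodule.subset_span hy, hux⟩
    | zero => exact zero_mem _
    | add y z hy hz ihy ihz =>
      have := hu y hy
      have := hu z hz
      rw [map_add] at hux
      exact add_mem (ihy (by linarith)) (ihz (by linarith))
    | smul c y hy ih =>
      rw [NNReal.smul_def, map_smul, smul_eq_mul, mul_eq_zero, NNReal.coe_eq_zero] at hux
      rcases hux with rfl | huy
      · rw [zero_smul]; exact zero_mem _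
      · exact Submodule.smul_mem _ c (ih huy)
  · have hface : {x ∈ (Submodule.span ℝ≥0 s : Set (Fin d → ℝ)) | u x = 0} =
        ↑(Submodule.span ℝ≥0 s ⊓ LinearMap.ker (u.restrictScalars ℝ≥0)) := rfl
    rw [hface]
    exact SetLike.coe_subset_coe.mpr (Submodule.span_le.mpr Set.inter_subset_right)

theorem setOf_isFace_span_finite {d : ℕ} {s : Set (Fin d → ℝ)} (hs : s.Finite) :
    {D | IsFace d (Submodule.span ℝ≥0 s) D}.Finite :=
  (hs.finite_subsets.image fun A => (Submodule.span ℝ≥0 A : Set (Fin d → ℝ))).subset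
    fun _ hD => ⟨_, Set.inter_subset_left, hD.eq_span_inter.symm⟩

theorem setOf_isFace_coneOf_finite {d : ℕ} {S : AddSubmonoid (Fin d → ℤ)} (hS : S.FG) :
    {D | IsFace d (coneOf d S) D}.Finite := by
  obtain ⟨T, rfl⟩ := hS
  have hcone : coneOf d (AddSubmonoid.closure T) = Submodule.span ℝ≥0 (emb d '' T) := by
    rw [coneOf, ← AddSubmonoid.coe_map, AddMonoidHom.map_mclosure, Submodule.span_closure]
  rw [hcone]
  exact setOf_isFace_span_finite (T.finite_toSet.image _)

theorem exists_pFace_ssuperset_of_isRelSat {d p : ℕ} (hp : p.Prime)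
    {S : AddSubmonoid (Fin d → ℤ)} {C D : Set (Fin d → ℝ)}
    (hfaces : {E | IsFace d C E}.Finite) (hpD : pFace d p S D) (hsat : IsRelSat d S C D) :
    ∃ E, IsFace d C E ∧ D ⊂ E ∧ pFace d p S E := by
  have := Fact.mk hp
  by_contra! hnone
  have habove : {E | IsFace d C E ∧ D ⊂ E}.Finite := hfaces.subset fun _ hE => hE.1
  set N := ∏ E ∈ habove.toFinset, (latticeOf d S E).relIndex (latIn d E)
  have hpN : ¬ p ∣ N := by
    rw [hp.prime.dvd_finsetProd_iff]
    rintro ⟨E, hE, hpE⟩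
    rw [Set.Finite.mem_toFinset] at hE
    exact hnone E hE.1 hE.2 hpE
  refine hpN (AddSubgroup.prime_dvd_of_nsmul_mem (fun hN => hpN (hN ▸ dvd_zero p))
    (fun x hx => ?_) hpD)
  rw [hsat.2.2]
  refine AddSubgroup.mem_inf.mpr ⟨?_, nsmul_mem hx N⟩
  simp only [AddSubgroup.mem_iInf]
  intro E hE
  obtain ⟨k, hk⟩ : _ ∣ N :=
    Finset.dvd_prod_of_mem (fun E => (latticeOf d S E).relIndex (latIn d E))
      (habove.mem_toFinset.mpr hE)
  have hxE : x ∈ latIn d E :=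
    AddSubgroup.comap_mono (Submodule.toAddSubgroup_mono (Submodule.span_mono hE.2.1)) hx
  rw [hk, mul_nsmul]
  exact nsmul_mem ((latticeOf d S E).nsmul_relIndex_mem hxE) k

theorem stmt_7_general (d : ℕ) (p : ℕ) (hp : p.Prime)
    (S : AddSubmonoid (Fin d → ℤ)) (hfg : S.FG)
    (C : Set (Fin d → ℝ)) (hC : C = coneOf d S)
    (D : Set (Fin d → ℝ)) (hD : IsFace d C D)
    (hpf : pFace d p S D) :
    ∃ D' : Set (Fin d → ℝ), (IsRUF d S C D' ∧ pFace d p S D') ∧ D ⊆ D' ∧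
      ∀ D'' : Set (Fin d → ℝ), IsRUF d S C D'' ∧ pFace d p S D'' → ¬ D' ⊂ D'' := by
  have hfaces : {E | IsFace d C E}.Finite := hC ▸ setOf_isFace_coneOf_finite hfg
  obtain ⟨E, hDE, hE⟩ := (hfaces.subset fun _ hE => hE.1 :
    {E | IsFace d C E ∧ pFace d p S E}.Finite).exists_le_maximal ⟨hD, hpf⟩
  refine ⟨E, ⟨⟨hE.prop.1, fun hsat => ?_⟩, hE.prop.2⟩, hDE, fun D'' hD'' => ?_⟩
  · obtain ⟨E', hE', hEE', hpE'⟩ := exists_pFace_ssuperset_of_isRelSat hp hfaces hE.prop.2 hsat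
    exact hE.not_gt ⟨hE', hpE'⟩ hEE'
  · exact hE.not_gt ⟨hD''.1.1, hD''.2⟩

/-- In a seminormal affine monoid with pointed cone `C` and prime `p`: every proper
`p`-face `D ⊊ C` (i.e. `p` divides the index `[M ∩ span D : M_D]`) is contained in some
maximal pRUF (a relatively unsaturated `p`-face not properly contained in any pRUF). -/
theorem stmt_7 (d : ℕ) (p : ℕ) (hp : p.Prime)
    (S : AddSubmonoid (Fin d → ℤ)) (hfg : S.FG)
    (hZ : AddSubgroup.closure (S : Set (Fin d → ℤ)) = ⊤)
    (C : Set (Fin d → ℝ)) (hC : C = coneOf d S)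
    (hpointed : ∀ x ∈ C, -x ∈ C → x = 0)
    (hsn : Seminormal d S C)
    (D : Set (Fin d → ℝ)) (hD : IsFace d C D) (hne : D ≠ C)
    (hpf : pFace d p S D) :
    ∃ D' : Set (Fin d → ℝ), (IsRUF d S C D' ∧ pFace d p S D') ∧ D ⊆ D' ∧
      ∀ D'' : Set (Fin d → ℝ), IsRUF d S C D'' ∧ pFace d p S D'' → ¬ D' ⊂ D'' :=
  stmt_7_general d p hp S hfg C hC D hD hpf

end
end
end

section
/- Let M = ℤ^n, C a full-dimensional pointed rational cone in ℝ^n with dual cone σ, and q = p^e. For a ∈ (1/q)M, the map π_a: k[(1/q)M] → k[M] sending x^u to x^{a+u} if a+u ∈ M and to 0 otherwise, restricts to a k[C ∩ M]-module homomorphism from (1/q)(C∩M)-graded piece to k[C ∩ M] if and only if ⟨a, v_ρ⟩ > -1 for every primitive generator v_ρ of every extremal ray ρ of σ. -/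
noncomputable section


noncomputable section

/-! If `⟨a, v_j⟩ > -q` for all `j` and `a + u = q t` with `u ∈ C`, then
`q ⟨t, v_j⟩ = ⟨a, v_j⟩ + ⟨u, v_j⟩ > -q`, so the integer `⟨t, v_j⟩` is `≥ 0`.
Conversely, if `⟨a, v_j⟩ ≤ -q`, pick `w ∈ ℤ^d` with `⟨w, v_j⟩ = 1` (primitivity of `v_j`) and a
lattice point `y` in the relative interior of the facet `v_j^⊥ ∩ C`; for `N` large,
`t = N y - w` has `⟨t, v_j⟩ = -1`, so `t ∉ C`, while `u = q t - a` lies in `C`. -/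

theorem Finset.Int.gcd_eq_one_of_gcd_natAbs_eq_one {ι : Type*} {s : Finset ι} {f : ι → ℤ}
    (h : s.gcd (fun i => (f i).natAbs) = 1) : s.gcd f = 1 := by
  have hdvd : (s.gcd f).natAbs ∣ s.gcd (fun i => (f i).natAbs) :=
    Finset.dvd_gcd fun i hi => Int.natAbs_dvd_natAbs.mpr (Finset.gcd_dvd hi)
  rw [h, Nat.dvd_one] at hdvd
  have := Finset.Int.finsetGcd_nonneg (s := s) (f := f)
  omega

theorem exists_dotProduct_eq_one {ι : Type*} [Fintype ι] {v : ι → ℤ}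
    (h : Finset.univ.gcd (fun i => (v i).natAbs) = 1) : ∃ w : ι → ℤ, w ⬝ᵥ v = 1 := by
  obtain ⟨w, hw⟩ := Finset.univ.gcd_eq_sum_mul v
  exact ⟨w, by rw [dotProduct_comm, dotProduct, ← hw, Finset.Int.gcd_eq_one_of_gcd_natAbs_eq_one h]⟩

theorem intCast_dotProduct {ι : Type*} [Fintype ι] (y u : ι → ℤ) :
    ((y ⬝ᵥ u : ℤ) : ℝ) = (Int.cast ∘ y) ⬝ᵥ (Int.cast ∘ u) :=
  RingHom.map_dotProduct (Int.castRingHom ℝ) y u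

theorem emb_mem_iff {d : ℕ} {κ : Type*} (v : κ → Fin d → ℤ) (t : Fin d → ℤ) :
    emb d t ∈ {x : Fin d → ℝ | ∀ j, 0 ≤ ∑ i, x i * (v j i : ℝ)} ↔ ∀ j, 0 ≤ t ⬝ᵥ v j := by
  refine forall_congr' fun j => ?_
  rw [← Int.cast_nonneg_iff (R := ℝ), intCast_dotProduct]
  rfl

theorem exists_intCast_mem_of_isOpen_of_smul_mem {ι : Type*} [Fintype ι] {U : Set (ι → ℝ)}
    (hU : IsOpen U) (hsmul : ∀ x ∈ U, ∀ c : ℝ, 0 < c → c • x ∈ U) (hne : U.Nonempty) :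
    ∃ z : ι → ℤ, (Int.cast ∘ z : ι → ℝ) ∈ U := by
  obtain ⟨x, hx⟩ := hne
  obtain ⟨ε, hε, hball⟩ := Metric.isOpen_iff.mp hU x hx
  refine ⟨fun i => round (x i / ε), ?_⟩
  have hnear : ε • (fun i => (round (x i / ε) : ℝ)) ∈ U := by
    refine hball ((dist_pi_lt_iff hε).mpr fun i => ?_)
    have hround := abs_sub_round (x i / ε)
    rw [Pi.smul_apply, smul_eq_mul, Real.dist_eq]
    calc |ε * round (x i / ε) - x i| = ε * |x i / ε - round (x i / ε)| := by
          rw [← abs_of_pos hε, ← abs_mul, abs_of_pos hε, abs_sub_comm]; field_simp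
      _ < ε := by nlinarith
  simpa [smul_smul, inv_mul_cancel₀ hε.ne', Function.comp_def] using
    hsmul _ hnear ε⁻¹ (inv_pos.mpr hε)

theorem exists_int_dotProduct_eq_zero_and_pos {ι κ : Type*} [Fintype ι] [Finite κ]
    (v : κ → ι → ℤ) {j : κ} {w : ι → ℤ} (hw : w ⬝ᵥ v j = 1) {x : ι → ℝ}
    (hxj : x ⬝ᵥ (Int.cast ∘ v j) = 0) (hx : ∀ j' ≠ j, 0 < x ⬝ᵥ (Int.cast ∘ v j')) :
    ∃ y : ι → ℤ, y ⬝ᵥ v j = 0 ∧ ∀ j' ≠ j, 0 < y ⬝ᵥ v j' := by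
  -- `P` projects onto the hyperplane `v j = 0` along `w` and preserves integrality.
  let P : (ι → ℝ) → (ι → ℝ) := fun r => r - (r ⬝ᵥ (Int.cast ∘ v j)) • (Int.cast ∘ w)
  let U : Set (ι → ℝ) := {r | ∀ j' ≠ j, 0 < P r ⬝ᵥ (Int.cast ∘ v j')}
  have hU : IsOpen U := by
    simp only [U, Set.ofPred_forall]
    exact isOpen_iInter_of_finite fun j' => isOpen_iInter_of_finite fun _ =>
      isOpen_lt continuous_const (by fun_prop)
  have hsmul : ∀ r ∈ U, ∀ c : ℝ, 0 < c → c • r ∈ U := fun r hr c hc j' hj' => by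
    have hP : P (c • r) = c • P r := by
      simp only [P, smul_dotProduct, smul_sub, smul_smul, smul_eq_mul]
    rw [hP, smul_dotProduct, smul_eq_mul]
    exact mul_pos hc (hr j' hj')
  have hxU : x ∈ U := fun j' hj' => by simpa [P, hxj] using hx j' hj'
  obtain ⟨z, hz⟩ := exists_intCast_mem_of_isOpen_of_smul_mem hU hsmul ⟨x, hxU⟩
  set y := z - (z ⬝ᵥ v j) • w
  have hPz : P (Int.cast ∘ z) = Int.cast ∘ y := by
    ext i; simp [P, y, ← intCast_dotProduct]
  refine ⟨y, by rw [sub_dotProduct, smul_dotProduct, hw, smul_eq_mul, mul_one, sub_self],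
    fun j' hj' => ?_⟩
  have := hz j' hj'
  rwa [hPz, ← intCast_dotProduct, Int.cast_pos] at this

theorem exists_dotProduct_eq_neg_one_of_le_neg {ι κ : Type*} [Fintype ι] [Finite κ]
    {v : κ → ι → ℤ} {j : κ} {w y : ι → ℤ} (hw : w ⬝ᵥ v j = 1) (hyj : y ⬝ᵥ v j = 0)
    (hy : ∀ j' ≠ j, 0 < y ⬝ᵥ v j') {q : ℤ} (hq : 0 < q) {a : ι → ℤ} (ha : a ⬝ᵥ v j ≤ -q) :
    ∃ t : ι → ℤ, t ⬝ᵥ v j = -1 ∧ ∀ j', 0 ≤ (q • t - a) ⬝ᵥ v j' := by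
  obtain ⟨N, hN⟩ := (Set.finite_range fun j' => |a ⬝ᵥ v j'| + |q * w ⬝ᵥ v j'|).bddAbove
  have hpair : ∀ j', (q • (N • y - w) - a) ⬝ᵥ v j' =
      q * N * y ⬝ᵥ v j' - q * w ⬝ᵥ v j' - a ⬝ᵥ v j' := fun j' => by
    simp only [sub_dotProduct, smul_dotProduct, smul_eq_mul]; ring
  refine ⟨N • y - w, by rw [sub_dotProduct, smul_dotProduct, hyj, hw, smul_zero, zero_sub],
    fun j' => ?_⟩
  rw [hpair]
  rcases eq_or_ne j' j with rfl | hj'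
  · rw [hyj, hw]; linarith
  · have hbound : |a ⬝ᵥ v j'| + |q * w ⬝ᵥ v j'| ≤ N := hN ⟨j', rfl⟩
    have hqy : 1 ≤ q * y ⬝ᵥ v j' := one_le_mul_of_one_le_of_one_le hq (hy j' hj')
    have hN0 : 0 ≤ N := le_trans (by positivity) hbound
    nlinarith [le_abs_self (a ⬝ᵥ v j'), le_abs_self (q * w ⬝ᵥ v j'),
      mul_nonneg hN0 (sub_nonneg.mpr hqy)]

theorem dotProduct_nonneg_of_smul_eq_add {ι : Type*} [Fintype ι] {q : ℤ} (hq : 0 < q)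
    {a u t v : ι → ℤ} (ht : q • t = a + u) (ha : -q < a ⬝ᵥ v) (hu : 0 ≤ u ⬝ᵥ v) :
    0 ≤ t ⬝ᵥ v := by
  have hqt : q * t ⬝ᵥ v = a ⬝ᵥ v + u ⬝ᵥ v := by
    rw [← smul_eq_mul, ← smul_dotProduct, ht, add_dotProduct]
  by_contra! h
  nlinarith

theorem stmt_9_general (d m : ℕ) (p : ℕ) (hp : p.Prime) (e : ℕ) (q : ℕ) (hq : q = p ^ e)
    (v : Fin m → Fin d → ℤ)
    (hprim : ∀ j, Finset.univ.gcd (fun i => (v j i).natAbs) = 1)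
    (C : Set (Fin d → ℝ))
    (hC : C = {x : Fin d → ℝ | ∀ j, 0 ≤ ∑ i, x i * (v j i : ℝ)})
    (hfacet : ∀ j, ∃ x ∈ C, (∑ i, x i * (v j i : ℝ)) = 0 ∧
      ∀ j', j' ≠ j → 0 < ∑ i, x i * (v j' i : ℝ))
    (a : Fin d → ℤ) :
    (∀ u : Fin d → ℤ, emb d u ∈ C → (∀ i, (q : ℤ) ∣ a i + u i) →
        emb d (fun i => (a i + u i) / (q : ℤ)) ∈ C)
      ↔ (∀ j, -(q : ℤ) < ∑ i, a i * v j i) := by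
  subst hC
  have hq0 : 0 < (q : ℤ) := by rw [hq]; exact_mod_cast pow_pos hp.pos e
  simp only [emb_mem_iff]
  constructor
  · intro H
    by_contra! ⟨j, hj⟩
    obtain ⟨w, hw⟩ := exists_dotProduct_eq_one (hprim j)
    obtain ⟨x, -, hxj, hx⟩ := hfacet j
    obtain ⟨y, hyj, hy⟩ := exists_int_dotProduct_eq_zero_and_pos v hw hxj hx
    obtain ⟨t, ht, hu⟩ := exists_dotProduct_eq_neg_one_of_le_neg hw hyj hy hq0 hj
    have hquot : (fun i => (a i + (q • t - a) i) / (q : ℤ)) = t := by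
      ext i; simp [Int.mul_ediv_cancel_left _ hq0.ne']
    have htC := H (q • t - a) hu fun i => by simp
    rw [hquot] at htC
    linarith [htC j]
  · intro h u hu hdvd j
    exact dotProduct_nonneg_of_smul_eq_add hq0
      (funext fun i => Int.mul_ediv_cancel' (hdvd i)) (h j) (hu j)

/-- Criterion of Payne for the normal case: let `C ⊂ ℝ^d` be a full-dimensional pointed
rational cone cut out by the primitive generators `v j` of the extremal rays of its dual
cone, `S̄ = C ∩ ℤ^d`, and `q = p^e`.  For `a ∈ (1/q)ℤ^d` (encoded by its numerator
vector `a`, the point being `a/q`), the map `π_a` restricts to a homomorphism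
`F^e_* k[S̄] → k[S̄]`, i.e. `(a + (1/q)S̄) ∩ M ⊆ S̄`, if and only if
`⟨a/q, v j⟩ > -1`, i.e. `⟨a, v j⟩ > -q`, for every `j`. -/
theorem stmt_9 (d m : ℕ) (p : ℕ) (hp : p.Prime) (e : ℕ) (q : ℕ) (hq : q = p ^ e)
    (v : Fin m → Fin d → ℤ)
    (hprim : ∀ j, Finset.univ.gcd (fun i => (v j i).natAbs) = 1)
    (C : Set (Fin d → ℝ))
    (hC : C = {x : Fin d → ℝ | ∀ j, 0 ≤ ∑ i, x i * (v j i : ℝ)})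
    (hfulldim : Submodule.span ℝ C = ⊤)
    (hpointed : ∀ x ∈ C, -x ∈ C → x = 0)
    (hfacet : ∀ j, ∃ x ∈ C, (∑ i, x i * (v j i : ℝ)) = 0 ∧
      ∀ j', j' ≠ j → 0 < ∑ i, x i * (v j' i : ℝ))
    (a : Fin d → ℤ) :
    (∀ u : Fin d → ℤ, emb d u ∈ C → (∀ i, (q : ℤ) ∣ a i + u i) →
        emb d (fun i => (a i + u i) / (q : ℤ)) ∈ C)
      ↔ (∀ j, -(q : ℤ) < ∑ i, a i * v j i) :=
  stmt_9_general d m p hp e q hq v hprim C hC hfacet a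
end
end
end

section
/- Let S be the submonoid of ℤ² generated by (4,0), (0,1), (1,1), (2,1), (3,1), p = 2, q = 2, and a = (1,0). Then a satisfies ⟨a, v_ρ⟩ > -1 for both dual cone rays, but π_a is not a homomorphism: (2,0) ∈ (1/2)S and a + (2,0) = (3,0) ∈ ℤ² but (3,0) ∉ S. -/
/-! All generators except `(4, 0)` lie at height `1`, so an element of `S` on the horizontal axis
is a sum of copies of `(4, 0)`; in particular `(3, 0) ∉ S`. Taking `s = (4, 0)` then exhibits the
lattice point `a + (1/2) s = (3, 0)` outside `S`. -/

def upperHalfPlaneAxisDvd (n : ℤ) : AddSubmonoid (ℤ × ℤ) where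
  carrier := {p | 0 ≤ p.2 ∧ (p.2 = 0 → n ∣ p.1)}
  zero_mem' := ⟨le_rfl, fun _ => dvd_zero n⟩
  add_mem' := by
    rintro ⟨x₁, y₁⟩ ⟨x₂, y₂⟩ ⟨hy₁, hx₁⟩ ⟨hy₂, hx₂⟩
    refine ⟨add_nonneg hy₁ hy₂, fun hy => ?_⟩
    have hy₁' : y₁ = 0 := by change y₁ + y₂ = 0 at hy; omega
    have hy₂' : y₂ = 0 := by change y₁ + y₂ = 0 at hy; omega
    exact dvd_add (hx₁ hy₁') (hx₂ hy₂')

lemma closure_le_upperHalfPlaneAxisDvd :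
    AddSubmonoid.closure ({(4, 0), (0, 1), (1, 1), (2, 1), (3, 1)} : Set (ℤ × ℤ)) ≤
      upperHalfPlaneAxisDvd 4 := by
  rw [AddSubmonoid.closure_le]
  rintro p (rfl | rfl | rfl | rfl | rfl) <;> exact ⟨by norm_num, by norm_num⟩

lemma three_zero_not_mem_closure :
    ((3, 0) : ℤ × ℤ) ∉
      AddSubmonoid.closure ({(4, 0), (0, 1), (1, 1), (2, 1), (3, 1)} : Set (ℤ × ℤ)) := fun h =>
  absurd ((closure_le_upperHalfPlaneAxisDvd h).2 rfl) (by decide)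

/-- Example: let `S ⊆ ℤ²` be generated by `(4,0), (0,1), (1,1), (2,1), (3,1)`, `p = q = 2`
and `a = (1,0)`.  Then `a` pairs `> -1` against both dual rays `(1,0)` and `(0,1)`, yet
`π_a` is not a homomorphism: `(2,0) ∈ (1/2)S` (as `(4,0) ∈ S`), `a + (2,0) = (3,0) ∈ ℤ²`,
but `(3,0) ∉ S`; in particular `(a + (1/2)S) ∩ ℤ² ⊄ S`. -/
theorem stmt_12 (S : AddSubmonoid (ℤ × ℤ))
    (hS : S = AddSubmonoid.closure {(4, 0), (0, 1), (1, 1), (2, 1), (3, 1)})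
    (a : ℤ × ℤ) (ha : a = (1, 0)) :
    (a.1 * 1 + a.2 * 0 > -1 ∧ a.1 * 0 + a.2 * 1 > -1) ∧
      (4, 0) ∈ S ∧ a + (2, 0) = (3, 0) ∧ (3, 0) ∉ S ∧
      ¬ (∀ s ∈ S, (2 : ℤ) ∣ 2 * a.1 + s.1 → (2 : ℤ) ∣ 2 * a.2 + s.2 →
          ((2 * a.1 + s.1) / 2, (2 * a.2 + s.2) / 2) ∈ S) := by
  subst ha hS
  have h4 : ((4, 0) : ℤ × ℤ) ∈
      AddSubmonoid.closure ({(4, 0), (0, 1), (1, 1), (2, 1), (3, 1)} : Set (ℤ × ℤ)) :=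
    AddSubmonoid.subset_closure (by simp)
  refine ⟨by norm_num, h4, by norm_num, three_zero_not_mem_closure, fun h => ?_⟩
  exact three_zero_not_mem_closure (h (4, 0) h4 (by norm_num) (by norm_num))
end

section
/- Let S be a seminormal affine monoid, D a p-face of its cone, and u ∈ S ∩ span(D). Then for no q = p^e, no a ∈ (1/q)M satisfying the splitting conditions (in particular a ∉ (1/q)M̃_D whenever a ∈ span(D) for a pRUF D), and no w ∈ (1/q)S, can one have π_a(x^w) = x^u. Consequently, fixed ideals of the Cartier algebra cannot intersect p-faces. -/
/-!
Write `L = latticeOf d S D` and `Λ = latIn d D`. As `D` is a face of the cone of `S`, it is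
spanned by `S ∩ D`, so `Λ ⧸ L` is finite; since `D` is a `p`-face, `p` divides its order, and
Cauchy gives `y ∈ Λ` of order `p` modulo `L`: `q • y ∈ L` but `y ∉ L`. Write `q • y = t₁ - t₂`
with `tᵢ ∈ S ∩ D`. If `a + w = q • u`, the splitting condition applied to
`w + q • (y + t₂) = w + t₁ + (q - 1) • t₂ ∈ S` gives `u + y + t₂ ∈ S`. This point lies in
`span D`, hence on the face `D`, so `y ∈ L`: a contradiction.
-/

noncomputable section


noncomputable section

open Submodule
open scoped NNReal

theorem mem_span_of_algebraMap_comp_mem_span {K L ι : Type*} [Field K] [Field L] [Algebra K L]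
    [Fintype ι] {s : Set (ι → K)} {x : ι → K}
    (h : algebraMap K L ∘ x ∈ span L ((algebraMap K L ∘ ·) '' s)) : x ∈ span K s := by
  classical
  by_contra hx
  -- a `K`-linear functional separating `x` from `span K s` extends coordinatewise to `L`
  obtain ⟨f, hfx, hfs⟩ := (span K s).exists_dual_map_eq_bot_of_notMem hx inferInstance
  let F : (ι → L) →ₗ[L] L :=
    ∑ i, algebraMap K L (f fun j => if i = j then 1 else 0) • LinearMap.proj i
  have hF : ∀ v, F (algebraMap K L ∘ v) = algebraMap K L (f v) := fun v => by
    simp [F, f.pi_apply_eq_sum_univ v, Algebra.smul_def, mul_comm]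
  have hFs : span L ((algebraMap K L ∘ ·) '' s) ≤ LinearMap.ker F := by
    rw [span_le]
    rintro _ ⟨v, hv, rfl⟩
    have hfv : f v ∈ map f (span K s) := mem_map_of_mem (subset_span hv)
    rw [hfs, mem_bot] at hfv
    simp [hF, hfv]
  exact hfx (by simpa [hF] using hFs h)

theorem exists_zsmul_mem_span_int_of_emb_mem_span {d : ℕ} {T : Set (Fin d → ℤ)}
    {y : Fin d → ℤ} (h : emb d y ∈ span ℝ (emb d '' T)) :
    ∃ n : ℤ, n ≠ 0 ∧ n • y ∈ span ℤ T := by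
  let c : (Fin d → ℤ) →ₗ[ℤ] (Fin d → ℚ) := (Algebra.linearMap ℤ ℚ).compLeft (Fin d)
  have hc : Function.Injective c := fun v v' h => funext fun i => by
    simpa [c] using congrFun h i
  have hemb : ∀ v, emb d v = algebraMap ℚ ℝ ∘ c v := fun v => by
    ext i; simp [emb, c]
  have hyQ : c y ∈ span ℚ (c '' T) :=
    mem_span_of_algebraMap_comp_mem_span (by simpa [hemb, Set.image_image] using h)
  obtain ⟨⟨n, hn⟩, hny⟩ :=
    multiple_mem_span_of_mem_localization_span (nonZeroDivisors ℤ) ℚ _ _ hyQ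
  rw [Submonoid.smul_def, ← map_smul, span_image, mem_map] at hny
  obtain ⟨z, hz, hzy⟩ := hny
  exact ⟨n, nonZeroDivisors.ne_zero hn, hc hzy ▸ hz⟩

namespace IsFace

variable {d : ℕ} {C : Submodule ℝ≥0 (Fin d → ℝ)} {D : Set (Fin d → ℝ)}

theorem zero_mem (hD : IsFace d C D) : (0 : Fin d → ℝ) ∈ D := by
  obtain ⟨ℓ, -, rfl⟩ := hD
  exact ⟨C.zero_mem, map_zero ℓ⟩

theorem add_mem (hD : IsFace d C D) {x y : Fin d → ℝ} (hx : x ∈ D) (hy : y ∈ D) :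
    x + y ∈ D := by
  obtain ⟨ℓ, -, rfl⟩ := hD
  exact ⟨C.add_mem hx.1 hy.1, by rw [map_add, hx.2, hy.2, add_zero]⟩

theorem mem_of_mem_span (hD : IsFace d C D) {x : Fin d → ℝ} (hxC : x ∈ C)
    (hx : x ∈ span ℝ D) : x ∈ D := by
  obtain ⟨ℓ, -, rfl⟩ := hD
  have hker : span ℝ {x ∈ (C : Set (Fin d → ℝ)) | ℓ x = 0} ≤ LinearMap.ker ℓ :=
    span_le.mpr fun z hz => hz.2
  exact ⟨hxC, hker hx⟩

theorem subset_span_inter {G : Set (Fin d → ℝ)} (hD : IsFace d (span ℝ≥0 G) D) :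
    D ⊆ span ℝ (G ∩ D) := by
  obtain ⟨ℓ, hℓ, rfl⟩ := hD
  rintro x ⟨hxC, hx⟩
  induction hxC using Submodule.span_induction with
  | mem z hz => exact subset_span ⟨hz, subset_span hz, hx⟩
  | zero => exact Submodule.zero_mem _
  | add y z hy hz ihy ihz =>
      rw [map_add] at hx
      have hy0 := hℓ y hy
      have hz0 := hℓ z hz
      exact Submodule.add_mem _ (ihy (by linarith)) (ihz (by linarith))
  | smul c z hz ihz =>
      rw [NNReal.smul_def, map_smul, smul_eq_mul, mul_eq_zero] at hx
      rw [NNReal.smul_def]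
      rcases hx with hc | hz0
      · simp [hc]
      · exact Submodule.smul_mem _ _ (ihz hz0)

end IsFace

namespace AddSubgroup

variable {G : Type*} [AddCommGroup G] {H K : AddSubgroup G}

theorem relIndex_ne_zero_of_forall_exists_zsmul_mem [AddGroup.FG K]
    (h : ∀ y ∈ K, ∃ n : ℤ, n ≠ 0 ∧ n • y ∈ H) : H.relIndex K ≠ 0 := by
  have hfg : AddGroup.FG (K ⧸ H.addSubgroupOf K) :=
    AddGroup.fg_of_surjective (QuotientAddGroup.mk'_surjective _)
  have htors : IsAddTorsion (K ⧸ H.addSubgroupOf K) := by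
    intro g
    obtain ⟨⟨y, hy⟩, rfl⟩ := QuotientAddGroup.mk_surjective g
    obtain ⟨n, hn, hny⟩ := h y hy
    refine isOfFinAddOrder_iff_zsmul_eq_zero.mpr ⟨n, hn, ?_⟩
    rw [← QuotientAddGroup.mk_zsmul, QuotientAddGroup.eq_zero_iff, mem_addSubgroupOf]
    exact hny
  have := AddCommGroup.finite_of_fg_isAddTorsion _ htors
  exact index_ne_zero_of_finite

theorem exists_notMem_nsmul_mem_of_prime_dvd_relIndex {p : ℕ} [Fact p.Prime]
    (h0 : H.relIndex K ≠ 0) (hp : p ∣ H.relIndex K) : ∃ y ∈ K, y ∉ H ∧ p • y ∈ H := by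
  have : (H.addSubgroupOf K).FiniteIndex := ⟨h0⟩
  obtain ⟨g, hg⟩ := exists_prime_addOrderOf_dvd_card' (G := K ⧸ H.addSubgroupOf K) p hp
  obtain ⟨⟨y, hy⟩, rfl⟩ := QuotientAddGroup.mk_surjective g
  refine ⟨y, hy, fun hyH => ?_, ?_⟩
  · rw [(QuotientAddGroup.eq_zero_iff _).mpr (mem_addSubgroupOf.mpr hyH), addOrderOf_zero] at hg
    exact (Fact.out : p.Prime).ne_one hg.symm
  · have hpg := addOrderOf_nsmul_eq_zero (QuotientAddGroup.mk (s := H.addSubgroupOf K) ⟨y, hy⟩)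
    rw [hg, ← QuotientAddGroup.mk_nsmul, QuotientAddGroup.eq_zero_iff, mem_addSubgroupOf] at hpg
    exact hpg

end AddSubgroup

section Lattice

variable {d : ℕ} {S : AddSubmonoid (Fin d → ℤ)} {D : Set (Fin d → ℝ)}

theorem emb_mem_coneOf {s : Fin d → ℤ} (hs : s ∈ S) : emb d s ∈ coneOf d S :=
  subset_span ⟨s, hs, rfl⟩

theorem mem_latticeOf_of_mem_span (hD : IsFace d (coneOf d S) D) {s : Fin d → ℤ} (hs : s ∈ S)
    (hsD : emb d s ∈ span ℝ D) : s ∈ latticeOf d S D :=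
  AddSubgroup.subset_closure ⟨hs, hD.mem_of_mem_span (emb_mem_coneOf hs) hsD⟩

theorem exists_sub_of_mem_latticeOf (hD : IsFace d (coneOf d S) D) {y : Fin d → ℤ}
    (hy : y ∈ latticeOf d S D) :
    ∃ t₁ ∈ (S : Set (Fin d → ℤ)) ∩ emb d ⁻¹' D, ∃ t₂ ∈ (S : Set (Fin d → ℤ)) ∩ emb d ⁻¹' D,
      y = t₁ - t₂ := by
  have h0 : (0 : Fin d → ℤ) ∈ (S : Set (Fin d → ℤ)) ∩ emb d ⁻¹' D :=
    ⟨S.zero_mem, by simpa using hD.zero_mem⟩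
  induction hy using AddSubgroup.closure_induction with
  | mem t ht => exact ⟨t, ht, 0, h0, (sub_zero t).symm⟩
  | zero => exact ⟨0, h0, 0, h0, (sub_zero 0).symm⟩
  | add y z _ _ hy hz =>
      obtain ⟨a, ha, b, hb, rfl⟩ := hy
      obtain ⟨c, hc, e, he, rfl⟩ := hz
      refine ⟨a + c, ⟨S.add_mem ha.1 hc.1, ?_⟩, b + e, ⟨S.add_mem hb.1 he.1, ?_⟩, by abel⟩
      · simpa using hD.add_mem ha.2 hc.2
      · simpa using hD.add_mem hb.2 he.2
  | neg y _ hy =>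
      obtain ⟨a, ha, b, hb, rfl⟩ := hy
      exact ⟨b, hb, a, ha, neg_sub a b⟩

theorem exists_zsmul_mem_latticeOf (hD : IsFace d (coneOf d S) D) {y : Fin d → ℤ}
    (hy : y ∈ latIn d D) : ∃ n : ℤ, n ≠ 0 ∧ n • y ∈ latticeOf d S D := by
  have hspan : span ℝ D ≤ span ℝ (emb d '' ((S : Set (Fin d → ℤ)) ∩ emb d ⁻¹' D)) := by
    rw [span_le, Set.image_inter_preimage]
    exact hD.subset_span_inter
  obtain ⟨n, hn, hny⟩ := exists_zsmul_mem_span_int_of_emb_mem_span (hspan hy)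
  refine ⟨n, hn, ?_⟩
  rw [latticeOf, ← span_int_eq_addSubgroupClosure]
  exact hny

theorem relIndex_latticeOf_latIn_ne_zero (hD : IsFace d (coneOf d S) D) :
    (latticeOf d S D).relIndex (latIn d D) ≠ 0 := by
  have : AddGroup.FG (latIn d D) := Module.Finite.iff_addGroup_fg.mp
    (inferInstance : Module.Finite ℤ (AddSubgroup.toIntSubmodule (latIn d D)))
  exact AddSubgroup.relIndex_ne_zero_of_forall_exists_zsmul_mem
    fun y hy => exists_zsmul_mem_latticeOf hD hy

end Lattice

/-- `π_a ∈ Hom_R(F^e_* R, R)` for `q = p ^ e`, i.e. `(a + (1/q) S) ∩ M ⊆ S`, where `a ∈ (1/q) M`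
is recorded by its numerator vector `q • a`. -/
def IsPiHom (d q : ℕ) (S : AddSubmonoid (Fin d → ℤ)) (a : Fin d → ℤ) : Prop :=
  ∀ s ∈ S, (∀ i, (q : ℤ) ∣ a i + s i) → (fun i => (a i + s i) / (q : ℤ)) ∈ S

section Splitting

variable {d q : ℕ} {S : AddSubmonoid (Fin d → ℤ)} {a w u : Fin d → ℤ}

theorem IsPiHom.add_mem (ha : IsPiHom d q S a) (hq : q ≠ 0) (hau : ∀ i, a i + w i = q * u i)
    {v : Fin d → ℤ} (hv : w + q • v ∈ S) : u + v ∈ S := by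
  have key : ∀ i, a i + (w + q • v) i = q * (u + v) i := fun i => by
    rw [Pi.add_apply, Pi.add_apply, Pi.smul_apply, nsmul_eq_mul]
    linear_combination hau i
  have hq' : (q : ℤ) ≠ 0 := Int.natCast_ne_zero.mpr hq
  have hdiv : (fun i => (a i + (w + q • v) i) / (q : ℤ)) = u + v :=
    funext fun i => by rw [key i, Int.mul_ediv_cancel_left _ hq']
  exact hdiv ▸ ha _ hv fun i => ⟨_, key i⟩

theorem mem_latticeOf_of_nsmul_mem {D : Set (Fin d → ℝ)} (hD : IsFace d (coneOf d S) D)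
    (ha : IsPiHom d q S a) (hq : q ≠ 0) (hw : w ∈ S) (hu : u ∈ S) (huD : emb d u ∈ span ℝ D)
    (hau : ∀ i, a i + w i = q * u i) {y : Fin d → ℤ} (hy : y ∈ latIn d D)
    (hqy : q • y ∈ latticeOf d S D) : y ∈ latticeOf d S D := by
  obtain ⟨t₁, ht₁, t₂, ht₂, hqy_eq⟩ := exists_sub_of_mem_latticeOf hD hqy
  obtain ⟨k, rfl⟩ := Nat.exists_eq_add_one_of_ne_zero hq
  have hv : w + (k + 1) • (y + t₂) ∈ S := by
    have : w + (k + 1) • (y + t₂) = w + t₁ + k • t₂ := by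
      rw [smul_add, hqy_eq, add_smul, one_smul]
      abel
    rw [this]
    exact S.add_mem (S.add_mem hw ht₁.1) (S.nsmul_mem ht₂.1 k)
  have huv := ha.add_mem hq hau hv
  have huvD : emb d (u + (y + t₂)) ∈ span ℝ D := by
    rw [map_add, map_add]
    exact Submodule.add_mem _ huD (Submodule.add_mem _ hy (subset_span ht₂.2))
  have hy_eq : y = u + (y + t₂) - u - t₂ := by abel
  rw [hy_eq]
  exact sub_mem (sub_mem (mem_latticeOf_of_mem_span hD huv huvD)
    (mem_latticeOf_of_mem_span hD hu huD)) (AddSubgroup.subset_closure ht₂)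

end Splitting

theorem stmt_13_general (d : ℕ) (p : ℕ) (hp : p.Prime)
    (S : AddSubmonoid (Fin d → ℤ))
    (C : Set (Fin d → ℝ)) (hC : C = coneOf d S)
    (D : Set (Fin d → ℝ)) (hD : IsFace d C D) (hpf : pFace d p S D)
    (u : Fin d → ℤ) (hu : u ∈ S) (huD : emb d u ∈ Submodule.span ℝ D) :
    ∀ e : ℕ, 0 < e → ∀ q : ℕ, q = p ^ e → ∀ a w : Fin d → ℤ, w ∈ S →
      (∀ s ∈ S, (∀ i, (q : ℤ) ∣ a i + s i) → (fun i => (a i + s i) / (q : ℤ)) ∈ S) →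
      (∀ D' : Set (Fin d → ℝ), IsRUF d S C D' → pFace d p S D' →
        emb d a ∈ Submodule.span ℝ D' → a ∉ Mtilde d p S D') →
      ¬ (∀ i, a i + w i = (q : ℤ) * u i) := by
  intro e he q hq a w hw ha _ hau
  subst hC
  have := Fact.mk hp
  obtain ⟨y, hy, hyL, hpy⟩ :=
    AddSubgroup.exists_notMem_nsmul_mem_of_prime_dvd_relIndex
      (relIndex_latticeOf_latIn_ne_zero hD) hpf
  have hq0 : q ≠ 0 := hq ▸ pow_ne_zero e hp.ne_zero
  have hqy : q • y ∈ latticeOf d S D := by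
    obtain ⟨k, hk⟩ : p ∣ q := hq ▸ dvd_pow_self p he.ne'
    rw [hk, mul_comm, mul_smul]
    exact nsmul_mem hpy k
  exact hyL (mem_latticeOf_of_nsmul_mem hD ha hq0 hw hu huD hau hy hqy)

/-- Lemma (monomials on `p`-faces cannot be hit): let `S` be a seminormal affine monoid,
`D` a `p`-face of its cone `C`, and `u ∈ S ∩ span D`.  Then for no `q = p^e` with
`e > 0`, no `a ∈ (1/q)ℤ^d` satisfying the splitting conditions — i.e. `π_a` a
homomorphism, `(a + (1/q)S) ∩ M ⊆ S`, and in particular `a ∉ (1/q)M̃_{D'}` whenever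
`a ∈ span D'` for a pRUF `D'` — and no `w ∈ (1/q)S`, can one have `π_a(x^w) = x^u`,
i.e. `a + w = u` as points of `(1/q)ℤ^d`.  (Here `a, w` are encoded by their numerator
vectors, so the conclusion reads `a + w ≠ q • u`.) -/
theorem stmt_13 (d : ℕ) (p : ℕ) (hp : p.Prime)
    (S : AddSubmonoid (Fin d → ℤ)) (hfg : S.FG)
    (hZ : AddSubgroup.closure (S : Set (Fin d → ℤ)) = ⊤)
    (C : Set (Fin d → ℝ)) (hC : C = coneOf d S)
    (hpointed : ∀ x ∈ C, -x ∈ C → x = 0)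
    (hsn : Seminormal d S C)
    (D : Set (Fin d → ℝ)) (hD : IsFace d C D) (hpf : pFace d p S D)
    (u : Fin d → ℤ) (hu : u ∈ S) (huD : emb d u ∈ Submodule.span ℝ D) :
    ∀ e : ℕ, 0 < e → ∀ q : ℕ, q = p ^ e → ∀ a w : Fin d → ℤ, w ∈ S →
      (∀ s ∈ S, (∀ i, (q : ℤ) ∣ a i + s i) → (fun i => (a i + s i) / (q : ℤ)) ∈ S) →
      (∀ D' : Set (Fin d → ℝ), IsRUF d S C D' → pFace d p S D' →
        emb d a ∈ Submodule.span ℝ D' → a ∉ Mtilde d p S D') →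
      ¬ (∀ i, a i + w i = (q : ℤ) * u i) :=
  stmt_13_general d p hp S C hC D hD hpf u hu huD

end
end
end

section
/- Let R = k[S] be a seminormal monoid algebra over a perfect field k of characteristic p > 0, and g = α₁x^{u₁} + ⋯ + α_n x^{u_n} with distinct u_i ∈ S and α_i ∈ k^×. If q = p^e is large enough that u_i − u_j ∉ qM for all i ≠ j, then for any a ∈ (1/q)M and u ∈ (1/q)S, at most one of the terms π_a(x^{u + u_i/q}) is nonzero; hence π_a(g^{1/q} x^u) is a monomial (possibly zero). -/
theorem stmt_18_general (d n : ℕ) (q : ℕ)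
    (u : Fin n → Fin d → ℤ)
    (hdist : ∀ i j, i ≠ j → ¬ (∀ k, (q : ℤ) ∣ u i k - u j k))
    (a w : Fin d → ℤ) :
    ∀ i j : Fin n, (∀ k, (q : ℤ) ∣ a k + w k + u i k) →
      (∀ k, (q : ℤ) ∣ a k + w k + u j k) → i = j := by
  intro i j hi hj
  by_contra hij
  refine hdist i j hij fun k => ?_
  simpa only [add_sub_add_left_eq_sub] using dvd_sub (hi k) (hj k)

/-- Monomial lemma: let `R = k[S]` for `S ⊆ ℤ^d`, and let `u₁, …, uₙ ∈ S` be distinct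
exponents of a polynomial `g = Σ αᵢ x^{uᵢ}`.  If `q = pᵉ` is large enough that
`uᵢ − uⱼ ∉ qM` for all `i ≠ j`, then for any `a ∈ (1/q)ℤ^d` and `w ∈ (1/q)S` (both
encoded by numerator vectors) at most one of the terms `π_a(x^{w + uᵢ/q})` is nonzero
(`π_a(x^{w + uᵢ/q}) ≠ 0` meaning `q ∣ a + w + uᵢ` coordinatewise); hence
`π_a(g^{1/q} x^w)` is a monomial (possibly zero). -/
theorem stmt_18 (d n : ℕ) (p : ℕ) (hp : p.Prime) (e : ℕ) (q : ℕ) (hq : q = p ^ e)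
    (S : AddSubmonoid (Fin d → ℤ))
    (u : Fin n → Fin d → ℤ) (hu : ∀ i, u i ∈ S)
    (hdist : ∀ i j, i ≠ j → ¬ (∀ k, (q : ℤ) ∣ u i k - u j k))
    (a w : Fin d → ℤ) (hw : w ∈ S) :
    ∀ i j : Fin n, (∀ k, (q : ℤ) ∣ a k + w k + u i k) →
      (∀ k, (q : ℤ) ∣ a k + w k + u j k) → i = j :=
  stmt_18_general d n q u hdist a w
end
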